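/- arXiv:1803.02516 — 6 statements merged into one kernel-verified Lean document; each statement's English description precedes it below -/
import Mathlib

section
/- Let f : B → A and g : C → A be connected epimorphisms between finite connected reflexive graphs. Let D be the induced subgraph of the product graph B × C on the set {(b,c) : f(b) = g(c)}. Then the projection p_B : D → B is a connected epimorphism. -/
/-- A subset `X` of a graph with edge relation `R` is connected if for all nonempty
`U₁, U₂ ⊆ X` with `X = U₁ ∪ U₂` there is an edge between `U₁` and `U₂`. -/
def FinConn {V : Type*} (R : V → V → Prop) (X : Set V) : Prop :=
  ∀ U₁ U₂ : Set V, U₁ ⊆ X → U₂ ⊆ X → U₁.Nonempty → U₂.Nonempty → X = U₁ ∪ U₂ →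
    ∃ x₁ ∈ U₁, ∃ x₂ ∈ U₂, R x₁ x₂

/-- A graph epimorphism: a homomorphism surjective on vertices and on edges. -/
def IsEpi {V W : Type*} (RB : V → V → Prop) (RA : W → W → Prop) (f : V → W) : Prop :=
  (∀ b b', RB b b' → RA (f b) (f b')) ∧ Function.Surjective f ∧
    (∀ a a', RA a a' → ∃ b b', RB b b' ∧ f b = a ∧ f b' = a')

/-- A connected epimorphism: an epimorphism such that the preimage of every connected
subset is connected. -/
def IsConnEpi {V W : Type*} (RB : V → V → Prop) (RA : W → W → Prop) (f : V → W) : Prop :=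
  IsEpi RB RA f ∧ ∀ X : Set W, FinConn RA X → FinConn RB (f ⁻¹' X)

/-!
Connectedness of a subset `X` of a reflexive graph amounts to any two of its points being
joined by a path inside `X`. Given a path `b₀ — b₁ — ⋯ — bₙ` in `X ⊆ B` and a point `(b₀, c₀)` of
the fibre product over `b₀`, lift it step by step: each edge `bᵢ — bᵢ₊₁` maps under `f` to an
edge of `A`, which lifts along the epimorphism `g` to an edge `c — c'` of `C`, hence to an edge
`(bᵢ, c) — (bᵢ₊₁, c')` of the fibre product. To chain consecutive lifted edges one must move
inside a single fibre `{bᵢ} × g⁻¹(f bᵢ)`; this is possible because `g⁻¹(f bᵢ)` is the preimage of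
a point under the connected epimorphism `g`, hence connected.
-/

def PathIn {V : Type*} (R : V → V → Prop) (X : Set V) : V → V → Prop :=
  Relation.ReflTransGen (fun a b => R a b ∧ a ∈ X ∧ b ∈ X)

namespace FinConn

variable {V : Type*} {R : V → V → Prop} {X : Set V}

theorem pathIn (h : FinConn R X) {x y : V} (hx : x ∈ X) (hy : y ∈ X) : PathIn R X x y := by
  by_contra hxy
  obtain ⟨z, hz, w, hw, hzw⟩ := h {z | z ∈ X ∧ PathIn R X x z} {z | z ∈ X ∧ ¬ PathIn R X x z}
    (fun _ hz => hz.1) (fun _ hz => hz.1) ⟨x, hx, .refl⟩ ⟨y, hy, hxy⟩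
    (by ext z; by_cases hz : PathIn R X x z <;> simp [hz])
  exact hw.2 (hz.2.tail ⟨hzw, hz.1, hw.1⟩)

theorem of_pathIn (hrefl : ∀ x ∈ X, R x x) (h : ∀ x ∈ X, ∀ y ∈ X, PathIn R X x y) :
    FinConn R X := by
  rintro U₁ U₂ hU₁ hU₂ ⟨x₁, hx₁⟩ ⟨x₂, hx₂⟩ hX
  have leaves : ∀ z, PathIn R X x₁ z → z ∈ U₁ ∨ ∃ a ∈ U₁, ∃ b ∈ U₂, R a b := by
    intro z hz
    induction hz with
    | refl => exact .inl hx₁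
    | tail _ hstep ih =>
      rcases ih with hy | hedge
      · have hz : _ ∈ U₁ ∪ U₂ := hX ▸ hstep.2.2
        exact hz.imp id fun hz => ⟨_, hy, _, hz, hstep.1⟩
      · exact .inr hedge
  rcases leaves x₂ (h x₁ (hU₁ hx₁) x₂ (hU₂ hx₂)) with hx₂' | hedge
  · exact ⟨x₂, hx₂', x₂, hx₂, hrefl x₂ (hU₂ hx₂)⟩
  · exact hedge

theorem singleton {a : V} (ha : R a a) : FinConn R {a} := by
  rintro U₁ U₂ hU₁ hU₂ ⟨x₁, hx₁⟩ ⟨x₂, hx₂⟩ -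
  obtain rfl : x₁ = a := hU₁ hx₁
  obtain rfl : x₂ = x₁ := hU₂ hx₂
  exact ⟨x₂, hx₁, x₂, hx₂, ha⟩

end FinConn

abbrev FiberProd {B C A : Type*} (f : B → A) (g : C → A) : Type _ :=
  {p : B × C // f p.1 = g p.2}

namespace FiberProd

variable {B C A : Type*} {RB : B → B → Prop} {RC : C → C → Prop} {RA : A → A → Prop}
  {f : B → A} {g : C → A}

def rel (RB : B → B → Prop) (RC : C → C → Prop) (p q : FiberProd f g) : Prop :=
  RB p.1.1 q.1.1 ∧ RC p.1.2 q.1.2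

theorem isEpi_fst (hf : ∀ b b', RB b b' → RA (f b) (f b')) (hg : IsEpi RC RA g) :
    IsEpi (rel RB RC) RB (fun p : FiberProd f g => p.1.1) := by
  refine ⟨fun _ _ h => h.1, fun b => ?_, fun b b' hbb' => ?_⟩
  · obtain ⟨c, hc⟩ := hg.2.1 (f b)
    exact ⟨⟨(b, c), hc.symm⟩, rfl⟩
  · obtain ⟨c, c', hcc', hc, hc'⟩ := hg.2.2 _ _ (hf b b' hbb')
    exact ⟨⟨(b, c), hc.symm⟩, ⟨(b', c'), hc'.symm⟩, ⟨hbb', hcc'⟩, rfl, rfl⟩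

theorem pathIn_of_pathIn_fiber (hreflB : ∀ b, RB b b) {X : Set B} {b : B} (hb : b ∈ X)
    {c c' : C} (hcc' : PathIn RC (g ⁻¹' {f b}) c c') (hc : f b = g c) (hc' : f b = g c') :
    PathIn (rel RB RC) ((fun p : FiberProd f g => p.1.1) ⁻¹' X) ⟨(b, c), hc⟩ ⟨(b, c'), hc'⟩ := by
  induction hcc' with
  | refl => exact .refl
  | tail _ hstep ih =>
    exact (ih hstep.2.1.symm).tail ⟨⟨hreflB b, hstep.1⟩, hb, hb⟩

theorem pathIn_of_fst_eq (hreflB : ∀ b, RB b b) (hfib : ∀ a, FinConn RC (g ⁻¹' {a}))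
    {X : Set B} {p q : FiberProd f g} (hp : p.1.1 ∈ X) (hpq : p.1.1 = q.1.1) :
    PathIn (rel RB RC) ((fun p : FiberProd f g => p.1.1) ⁻¹' X) p q := by
  obtain ⟨⟨b, c⟩, hc⟩ := p
  obtain ⟨⟨b', c'⟩, hc'⟩ := q
  obtain rfl : b = b' := hpq
  exact pathIn_of_pathIn_fiber hreflB hp
    ((hfib (f b)).pathIn hc.symm hc'.symm) hc hc'

theorem exists_pathIn_lift (hreflB : ∀ b, RB b b) (hf : ∀ b b', RB b b' → RA (f b) (f b'))
    (hg : IsEpi RC RA g) (hfib : ∀ a, FinConn RC (g ⁻¹' {a})) {X : Set B} {b b' : B}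
    (hbb' : PathIn RB X b b') (p : FiberProd f g) (hp : p.1.1 = b) :
    ∃ q : FiberProd f g, q.1.1 = b' ∧
      PathIn (rel RB RC) ((fun p : FiberProd f g => p.1.1) ⁻¹' X) p q := by
  induction hbb' with
  | refl => exact ⟨p, hp, .refl⟩
  | @tail m m' _ hstep ih =>
    obtain ⟨q, hq, hpq⟩ := ih
    obtain ⟨c, c', hcc', hc, hc'⟩ := hg.2.2 _ _ (hf m m' hstep.1)
    have hq_to_c : PathIn (rel RB RC) _ q ⟨(m, c), hc.symm⟩ :=
      pathIn_of_fst_eq hreflB hfib (hq ▸ hstep.2.1) hq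
    exact ⟨⟨(m', c'), hc'.symm⟩, rfl,
      (hpq.trans hq_to_c).tail ⟨⟨hstep.1, hcc'⟩, hstep.2.1, hstep.2.2⟩⟩

theorem finConn_preimage_fst (hreflB : ∀ b, RB b b) (hreflC : ∀ c, RC c c)
    (hf : ∀ b b', RB b b' → RA (f b) (f b')) (hg : IsEpi RC RA g)
    (hfib : ∀ a, FinConn RC (g ⁻¹' {a})) {X : Set B} (hX : FinConn RB X) :
    FinConn (rel RB RC) ((fun p : FiberProd f g => p.1.1) ⁻¹' X) := by
  refine FinConn.of_pathIn (fun _ _ => ⟨hreflB _, hreflC _⟩) fun p hp q hq => ?_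
  obtain ⟨q', hq', hpq'⟩ := exists_pathIn_lift hreflB hf hg hfib (hX.pathIn hp hq) p rfl
  exact hpq'.trans (pathIn_of_fst_eq hreflB hfib (hq' ▸ hq) hq')

end FiberProd

theorem fiberProduct_projection_connEpi_general
    {B C A : Type*}
    (RB : B → B → Prop) (RC : C → C → Prop) (RA : A → A → Prop)
    (hreflB : ∀ b, RB b b)
    (hreflC : ∀ c, RC c c)
    (hreflA : ∀ a, RA a a)
    (f : B → A) (g : C → A)
    (hf : IsConnEpi RB RA f) (hg : IsConnEpi RC RA g) :
    IsConnEpi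
      (fun p q : {p : B × C // f p.1 = g p.2} =>
        RB p.1.1 q.1.1 ∧ RC p.1.2 q.1.2)
      RB (fun p => p.1.1) := by
  have hfib : ∀ a, FinConn RC (g ⁻¹' {a}) := fun a => hg.2 _ (FinConn.singleton (hreflA a))
  exact ⟨FiberProd.isEpi_fst hf.1.1 hg.1,
    fun _ hX => FiberProd.finConn_preimage_fst hreflB hreflC hf.1.1 hg.1 hfib hX⟩

/-- the projection from the fiber-product graph to `B` is a connected
epimorphism, given connected epimorphisms `f : B → A` and `g : C → A` between finite
connected reflexive graphs. -/
theorem fiberProduct_projection_connEpi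
    {B C A : Type*} [Fintype B] [Fintype C] [Fintype A]
    (RB : B → B → Prop) (RC : C → C → Prop) (RA : A → A → Prop)
    (hreflB : ∀ b, RB b b) (hsymmB : ∀ b b', RB b b' → RB b' b)
    (hreflC : ∀ c, RC c c) (hsymmC : ∀ c c', RC c c' → RC c' c)
    (hreflA : ∀ a, RA a a) (hsymmA : ∀ a a', RA a a' → RA a' a)
    (hconnB : FinConn RB Set.univ) (hconnC : FinConn RC Set.univ)
    (hconnA : FinConn RA Set.univ)
    (f : B → A) (g : C → A)
    (hf : IsConnEpi RB RA f) (hg : IsConnEpi RC RA g) :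
    IsConnEpi
      (fun p q : {p : B × C // f p.1 = g p.2} =>
        RB p.1.1 q.1.1 ∧ RC p.1.2 q.1.2)
      RB (fun p => p.1.1) :=
  fiberProduct_projection_connEpi_general RB RC RA hreflB hreflC hreflA f g hf hg
end

section
/- The class of finite connected reflexive graphs with connected epimorphisms as morphisms satisfies the projective amalgamation property: for any connected epimorphisms f : B → A and g : C → A between finite connected graphs, there exist a finite connected graph D and connected epimorphisms f' : D → B and g' : D → C such that f ∘ f' = g ∘ g'. -/
/-!
The pullback `D = {(b, c) | f b = g c}` with the product relation is the amalgam. A walk in `B`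
lifts to `D` edge by edge: over an edge `b b'`, the preimage under `g` of the clique `{f b, f b'}`
is connected, and a walk in it lifts to `D` because any two points of `{b, b'}` are adjacent.
By symmetry the same holds for the projection to `C`.
-/

open Relation

section Connectivity

variable {V : Type*} {R : V → V → Prop}

def StepWithin (R : V → V → Prop) (X : Set V) (x y : V) : Prop :=
  x ∈ X ∧ y ∈ X ∧ R x y

def IsCliqueIn (R : V → V → Prop) (T : Set V) : Prop :=
  ∀ x ∈ T, ∀ y ∈ T, R x y

theorem finConn_iff_reflTransGen (hrefl : ∀ v, R v v) {X : Set V} :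
    FinConn R X ↔ ∀ x ∈ X, ∀ y ∈ X, ReflTransGen (StepWithin R X) x y := by
  constructor
  · intro h x hx y hy
    by_contra hxy
    obtain ⟨z, ⟨hzX, hxz⟩, w, ⟨hwX, hxw⟩, hzw⟩ :=
      h {z | z ∈ X ∧ ReflTransGen (StepWithin R X) x z}
        {z | z ∈ X ∧ ¬ ReflTransGen (StepWithin R X) x z}
        (fun _ hz => hz.1) (fun _ hz => hz.1) ⟨x, hx, .refl⟩ ⟨y, hy, hxy⟩
        (by ext z; by_cases hz : ReflTransGen (StepWithin R X) x z <;> simp [hz])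
    exact hxw (hxz.tail ⟨hzX, hwX, hzw⟩)
  · rintro h U₁ U₂ h₁ h₂ ⟨x, hx⟩ ⟨y, hy⟩ hcov
    have hpath := h x (h₁ hx) y (h₂ hy)
    induction hpath with
    | refl => exact ⟨x, hx, x, hy, hrefl x⟩
    | @tail z w _ hzw ih =>
      rcases (hcov ▸ hzw.1 : z ∈ U₁ ∪ U₂) with hz | hz
      · exact ⟨z, hz, w, hy, hzw.2.2⟩
      · exact ih hz

theorem IsCliqueIn.finConn {T : Set V} (hT : IsCliqueIn R T) : FinConn R T := by
  rintro U₁ U₂ h₁ h₂ ⟨x, hx⟩ ⟨y, hy⟩ -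
  exact ⟨x, hx, y, hy, hT x (h₁ hx) y (h₂ hy)⟩

theorem isCliqueIn_pair (hrefl : ∀ v, R v v) (hsymm : ∀ v w, R v w → R w v) {a b : V}
    (hab : R a b) : IsCliqueIn R {a, b} := by
  rintro x (rfl | rfl) y (rfl | rfl)
  exacts [hrefl _, hab, hsymm _ _ hab, hrefl _]

theorem IsCliqueIn.image {W : Type*} {S : W → W → Prop} {f : V → W}
    (hf : ∀ v w, R v w → S (f v) (f w)) {T : Set V} (hT : IsCliqueIn R T) :
    IsCliqueIn S (f '' T) := by
  rintro _ ⟨x, hx, rfl⟩ _ ⟨y, hy, rfl⟩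
  exact hf x y (hT x hx y hy)

theorem finConn_preimage_of_joined {D : Type*} {RD : D → D → Prop} (hreflD : ∀ d, RD d d)
    (hreflV : ∀ v, R v v) {π : D → V} (hπ : Function.Surjective π) {X : Set V}
    (hX : FinConn R X)
    (hjoin : ∀ v ∈ X, ∀ w ∈ X, R v w → ∀ d e, π d = v → π e = w →
      ReflTransGen (StepWithin RD (π ⁻¹' X)) d e) :
    FinConn RD (π ⁻¹' X) := by
  refine (finConn_iff_reflTransGen hreflD).2 fun d hd e he => ?_
  suffices ∀ w, ReflTransGen (StepWithin R X) (π d) w →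
      ∀ e, π e = w → ReflTransGen (StepWithin RD (π ⁻¹' X)) d e from
    this _ ((finConn_iff_reflTransGen hreflV).1 hX _ hd _ he) e rfl
  intro w hpath
  induction hpath with
  | refl => exact fun e he => hjoin _ hd _ hd (hreflV _) d e rfl he
  | @tail v w _ hvw ih =>
    intro e he
    obtain ⟨d', rfl⟩ := hπ v
    exact (ih d' rfl).trans (hjoin _ hvw.1 _ hvw.2.1 hvw.2.2 d' e rfl he)

end Connectivity

/-- Only surjectivity of `D` onto the pullback `{(b, c) | f b = g c}` is required. -/
structure IsPullbackSquare {A B C D : Type*} (RB : B → B → Prop) (RC : C → C → Prop)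
    (RD : D → D → Prop) (f : B → A) (g : C → A) (p : D → B) (q : D → C) : Prop where
  comm : ∀ d, f (p d) = g (q d)
  lift : ∀ b c, f b = g c → ∃ d, p d = b ∧ q d = c
  rel_iff : ∀ d e, RD d e ↔ RB (p d) (p e) ∧ RC (q d) (q e)

namespace IsPullbackSquare

variable {A B C D : Type*} {RA : A → A → Prop} {RB : B → B → Prop} {RC : C → C → Prop}
  {RD : D → D → Prop} {f : B → A} {g : C → A} {p : D → B} {q : D → C}

theorem symm (h : IsPullbackSquare RB RC RD f g p q) : IsPullbackSquare RC RB RD g f q p where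
  comm d := (h.comm d).symm
  lift c b hcb := (h.lift b c hcb.symm).imp fun _ hd => hd.symm
  rel_iff d e := (h.rel_iff d e).trans and_comm

/-- A walk in the fibres of `g` over `f '' T` lifts to `D` because `T` is a clique. -/
theorem reflTransGen_of_isCliqueIn (h : IsPullbackSquare RB RC RD f g p q)
    (hreflC : ∀ c, RC c c) {X T : Set B} (hTX : T ⊆ X) (hT : IsCliqueIn RB T)
    (hconn : FinConn RC (g ⁻¹' (f '' T))) {d e : D} (hd : p d ∈ T) (he : p e ∈ T) :
    ReflTransGen (StepWithin RD (p ⁻¹' X)) d e := by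
  have hmem : ∀ d', p d' ∈ T → q d' ∈ g ⁻¹' (f '' T) := fun d' hd' =>
    ⟨p d', hd', h.comm d'⟩
  have hpath := (finConn_iff_reflTransGen hreflC).1 hconn _ (hmem d hd) _ (hmem e he)
  suffices ∀ c, ReflTransGen (StepWithin RC (g ⁻¹' (f '' T))) (q d) c →
      ∀ e, q e = c → p e ∈ T → ReflTransGen (StepWithin RD (p ⁻¹' X)) d e from
    this _ hpath e rfl he
  intro c hpath
  induction hpath with
  | refl =>
    intro e hqe he
    refine .single ⟨hTX hd, hTX he, (h.rel_iff d e).2 ⟨hT _ hd _ he, ?_⟩⟩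
    rw [hqe]
    exact hreflC _
  | @tail c₁ c₂ _ hc ih =>
    rintro e rfl he
    obtain ⟨b, hb, hbc⟩ := hc.1
    obtain ⟨d', rfl, rfl⟩ := h.lift b c₁ hbc
    exact (ih d' rfl hb).tail
      ⟨hTX hb, hTX he, (h.rel_iff d' e).2 ⟨hT _ hb _ he, hc.2.2⟩⟩

theorem isConnEpi_fst (h : IsPullbackSquare RB RC RD f g p q) (hreflB : ∀ b, RB b b)
    (hsymmB : ∀ b b', RB b b' → RB b' b) (hreflC : ∀ c, RC c c)
    (hf : ∀ b b', RB b b' → RA (f b) (f b')) (hg : IsConnEpi RC RA g) :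
    IsConnEpi RD RB p := by
  have hsurj : Function.Surjective p := fun b =>
    let ⟨c, hc⟩ := hg.1.2.1 (f b)
    (h.lift b c hc.symm).imp fun _ hd => hd.1
  refine ⟨⟨fun d e hde => ((h.rel_iff d e).1 hde).1, hsurj, fun b b' hbb' => ?_⟩, fun X hX => ?_⟩
  · obtain ⟨c, c', hcc', hc, hc'⟩ := hg.1.2.2 _ _ (hf b b' hbb')
    obtain ⟨d, rfl, rfl⟩ := h.lift b c hc.symm
    obtain ⟨d', rfl, rfl⟩ := h.lift b' c' hc'.symm
    exact ⟨d, d', (h.rel_iff d d').2 ⟨hbb', hcc'⟩, rfl, rfl⟩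
  · refine finConn_preimage_of_joined (fun d => (h.rel_iff d d).2 ⟨hreflB _, hreflC _⟩)
      hreflB hsurj hX fun b hb b' hb' hbb' d e hd he => ?_
    have hpair := isCliqueIn_pair hreflB hsymmB hbb'
    refine h.reflTransGen_of_isCliqueIn hreflC ?_ hpair (hg.2 _ (hpair.image hf).finConn)
      (by simp [hd]) (by simp [he])
    rintro _ (rfl | rfl) <;> assumption

end IsPullbackSquare

theorem isPullbackSquare_subtype {A B C : Type*} (RB : B → B → Prop) (RC : C → C → Prop)
    (f : B → A) (g : C → A) :
    IsPullbackSquare RB RC (fun d e : {p : B × C // f p.1 = g p.2} =>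
        RB d.1.1 e.1.1 ∧ RC d.1.2 e.1.2) f g (fun d => d.1.1) (fun d => d.1.2) where
  comm d := d.2
  lift b c hbc := ⟨⟨(b, c), hbc⟩, rfl, rfl⟩
  rel_iff _ _ := .rfl

theorem projective_amalgamation_general
    {B C A : Type} [Fintype B] [Fintype C]
    (RB : B → B → Prop) (RC : C → C → Prop) (RA : A → A → Prop)
    (hreflB : ∀ b, RB b b) (hsymmB : ∀ b b', RB b b' → RB b' b)
    (hreflC : ∀ c, RC c c) (hsymmC : ∀ c c', RC c c' → RC c' c)
    (hconnB : FinConn RB Set.univ)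
    (f : B → A) (g : C → A)
    (hf : IsConnEpi RB RA f) (hg : IsConnEpi RC RA g) :
    ∃ (D : Type) (_ : Fintype D) (RD : D → D → Prop),
      (∀ d, RD d d) ∧ (∀ d d', RD d d' → RD d' d) ∧ FinConn RD Set.univ ∧
      ∃ (f' : D → B) (g' : D → C),
        IsConnEpi RD RB f' ∧ IsConnEpi RD RC g' ∧ f ∘ f' = g ∘ g' := by
  classical
  have hsq := isPullbackSquare_subtype RB RC f g
  have hf' := hsq.isConnEpi_fst hreflB hsymmB hreflC hf.1.1 hg
  have hg' := hsq.symm.isConnEpi_fst hreflC hsymmC hreflB hg.1.1 hf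
  exact ⟨_, inferInstance, _, fun _ => ⟨hreflB _, hreflC _⟩,
    fun _ _ h => ⟨hsymmB _ _ h.1, hsymmC _ _ h.2⟩, hf'.2 _ hconnB, _, _, hf', hg',
    funext hsq.comm⟩

/-- projective amalgamation property for the class of finite connected
reflexive graphs with connected epimorphisms. -/
theorem projective_amalgamation
    {B C A : Type} [Fintype B] [Fintype C] [Fintype A]
    (RB : B → B → Prop) (RC : C → C → Prop) (RA : A → A → Prop)
    (hreflB : ∀ b, RB b b) (hsymmB : ∀ b b', RB b b' → RB b' b)
    (hreflC : ∀ c, RC c c) (hsymmC : ∀ c c', RC c c' → RC c' c)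
    (hreflA : ∀ a, RA a a) (hsymmA : ∀ a a', RA a a' → RA a' a)
    (hconnB : FinConn RB Set.univ) (hconnC : FinConn RC Set.univ)
    (hconnA : FinConn RA Set.univ)
    (f : B → A) (g : C → A)
    (hf : IsConnEpi RB RA f) (hg : IsConnEpi RC RA g) :
    ∃ (D : Type) (_ : Fintype D) (RD : D → D → Prop),
      (∀ d, RD d d) ∧ (∀ d d', RD d d' → RD d' d) ∧ FinConn RD Set.univ ∧
      ∃ (f' : D → B) (g' : D → C),
        IsConnEpi RD RB f' ∧ IsConnEpi RD RC g' ∧ f ∘ f' = g ∘ g' :=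
  projective_amalgamation_general RB RC RA hreflB hsymmB hreflC hsymmC hconnB f g hf hg
end

section
/- Let K be the inverse limit of an inverse sequence (K_n, f^n_m) of finite connected graphs with connected epimorphisms as bonding maps, with edge relation R^K((x_n),(y_n)) iff R^{K_n}(x_n,y_n) for all n. Then K, as a topological graph, is connected: for all open U₁, U₂ ⊆ K with K = U₁ ∪ U₂ and both nonempty, there exist x₁ ∈ U₁, x₂ ∈ U₂ with R^K(x₁,x₂). -/
/-- Connectedness of a subset of a topological graph. -/
def TopConn {K : Type*} [TopologicalSpace K] (R : K → K → Prop) (X : Set K) : Prop :=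
  ∀ U₁ U₂ : Set K, IsOpen U₁ → IsOpen U₂ → (X ∩ U₁).Nonempty → (X ∩ U₂).Nonempty →
    X ⊆ U₁ ∪ U₂ → ∃ x₁ ∈ X ∩ U₁, ∃ x₂ ∈ X ∩ U₂, R x₁ x₂

/-- The inverse limit of a sequence of (finite, discrete) sets with bonding maps. -/
def InvLim (K : ℕ → Type) (f : ∀ n, K (n+1) → K n) : Type :=
  {x : ∀ n, K n // ∀ n, f n (x (n+1)) = x n}

/-- The inverse-limit topology, where each `K n` carries the discrete topology. -/
instance InvLim.topologicalSpace (K : ℕ → Type) (f : ∀ n, K (n+1) → K n) :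
    TopologicalSpace (InvLim K f) :=
  @instTopologicalSpaceSubtype _ _ (@Pi.topologicalSpace ℕ K (fun _ => ⊥))

/-- The coordinatewise edge relation on the inverse limit. -/
def limR {K : ℕ → Type} (R : ∀ n, K n → K n → Prop) {f : ∀ n, K (n+1) → K n}
    (x y : InvLim K f) : Prop :=
  ∀ n, R n (x.1 n) (y.1 n)

namespace InvLim

variable {K : ℕ → Type} {f : ∀ n, K (n+1) → K n}

theorem eval_eq_of_le {x y : InvLim K f} {n m : ℕ} (hnm : n ≤ m) (h : x.1 m = y.1 m) :
    x.1 n = y.1 n := by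
  induction m, hnm using Nat.le_induction with
  | base => exact h
  | succ m _ ih => exact ih (by rw [← x.2 m, ← y.2 m, h])

/-- The induction on `m` passes to the shifted system `K (· + 1)`, so every lift is built upwards
from level `0` and no composite bonding maps are needed. -/
theorem surjective_eval (hf : ∀ n, Function.Surjective (f n)) (m : ℕ) :
    Function.Surjective fun x : InvLim K f => x.1 m := by
  induction m generalizing K with
  | zero =>
    intro a
    let u : ∀ n, K n := fun n => Nat.rec a (fun n y => Function.surjInv (hf n) y) n
    exact ⟨⟨u, fun n => Function.surjInv_eq (hf n) (u n)⟩, rfl⟩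
  | succ m ih =>
    intro a
    obtain ⟨x, hx⟩ := ih (K := fun n => K (n+1)) (f := fun n => f (n+1)) (fun n => hf (n+1)) a
    refine ⟨⟨fun n => n.casesOn (f 0 (x.1 0)) x.1, ?_⟩, hx⟩
    rintro (_ | n)
    · rfl
    · exact x.2 n

theorem exists_limR_of_rel {R : ∀ n, K n → K n → Prop} (hf : ∀ n, IsEpi (R (n+1)) (R n) (f n))
    {m : ℕ} {a b : K m} (hab : R m a b) :
    ∃ x y : InvLim K f, limR R x y ∧ x.1 m = a ∧ y.1 m = b := by
  let E : ℕ → Type := fun n => {p : K n × K n // R n p.1 p.2}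
  let g : ∀ n, E (n+1) → E n := fun n p => ⟨(f n p.1.1, f n p.1.2), (hf n).1 _ _ p.2⟩
  have hg : ∀ n, Function.Surjective (g n) := by
    rintro n ⟨⟨a, b⟩, hab⟩
    obtain ⟨a', b', hR, rfl, rfl⟩ := (hf n).2.2 a b hab
    exact ⟨⟨(a', b'), hR⟩, rfl⟩
  obtain ⟨e, he⟩ := surjective_eval hg m ⟨(a, b), hab⟩
  exact ⟨⟨fun n => (e.1 n).1.1, fun n => congrArg (fun p => p.1.1) (e.2 n)⟩,
    ⟨fun n => (e.1 n).1.2, fun n => congrArg (fun p => p.1.2) (e.2 n)⟩,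
    fun n => (e.1 n).2, congrArg (fun p => p.1.1) he, congrArg (fun p => p.1.2) he⟩

theorem isOpen_setOf_eval_eq (n : ℕ) (c : K n) : IsOpen {y : InvLim K f | y.1 n = c} :=
  letI : ∀ n, TopologicalSpace (K n) := fun _ => ⊥
  haveI : ∀ n, DiscreteTopology (K n) := fun _ => ⟨rfl⟩
  (isOpen_discrete {c}).preimage ((continuous_apply n).comp continuous_subtype_val)

theorem exists_eval_eq_subset {U : Set (InvLim K f)} (hU : IsOpen U) {x : InvLim K f}
    (hx : x ∈ U) : ∃ N, ∀ y : InvLim K f, y.1 N = x.1 N → y ∈ U := by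
  let : ∀ n, TopologicalSpace (K n) := fun _ => ⊥
  obtain ⟨V, hV, rfl⟩ := isOpen_induced_iff.mp hU
  obtain ⟨I, u, hu, hIu⟩ := isOpen_pi_iff.mp hV x.1 hx
  refine ⟨I.sup id, fun y hy => hIu fun i hi => ?_⟩
  have hyi : y.1 i = x.1 i := eval_eq_of_le (Finset.le_sup (f := id) hi) hy
  exact hyi ▸ (hu i hi).2

instance compactSpace [∀ n, Finite (K n)] : CompactSpace (InvLim K f) := by
  let _ : ∀ n, TopologicalSpace (K n) := fun _ => ⊥
  have _ : ∀ n, DiscreteTopology (K n) := fun _ => ⟨rfl⟩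
  have hcl : IsClosed {x : ∀ n, K n | ∀ n, f n (x (n+1)) = x n} := by
    simp only [Set.ofPred_forall]
    exact isClosed_iInter fun n =>
      isClosed_eq (continuous_of_discreteTopology.comp (continuous_apply (n+1)))
        (continuous_apply n)
  exact isCompact_iff_compactSpace.mp hcl.isCompact

/-- The sets of points whose level-`N` coordinate decides membership in `U` form an increasing
open cover, so by compactness one of them is everything. -/
theorem exists_level_of_isClopen [∀ n, Finite (K n)] {U : Set (InvLim K f)} (hU : IsClopen U) :
    ∃ N, ∀ x y : InvLim K f, x.1 N = y.1 N → (x ∈ U ↔ y ∈ U) := by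
  let V : ℕ → Set (InvLim K f) := fun N => {x | ∀ y, x.1 N = y.1 N → (x ∈ U ↔ y ∈ U)}
  have hVo : ∀ N, IsOpen (V N) := fun N => isOpen_iff_forall_mem_open.mpr fun x hx =>
    ⟨{z | z.1 N = x.1 N}, fun z hz y hzy => (hx z hz.symm).symm.trans (hx y (hz ▸ hzy)),
      isOpen_setOf_eval_eq N _, rfl⟩
  have hVmono : Monotone V := fun N M hNM x hx y hxy => hx y (eval_eq_of_le hNM hxy)
  have hVcover : Set.univ ⊆ ⋃ N, V N := by
    intro x _
    by_cases hx : x ∈ U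
    · obtain ⟨N, hN⟩ := exists_eval_eq_subset hU.isOpen hx
      exact Set.mem_iUnion.mpr ⟨N, fun y hy => iff_of_true hx (hN y hy.symm)⟩
    · obtain ⟨N, hN⟩ := exists_eval_eq_subset hU.compl.isOpen hx
      exact Set.mem_iUnion.mpr ⟨N, fun y hy => iff_of_false hx (hN y hy.symm)⟩
  obtain ⟨N, hN⟩ := isCompact_univ.elim_directed_cover V hVo hVcover hVmono.directed_le
  exact ⟨N, fun x y hxy => hN (Set.mem_univ x) y hxy⟩

end InvLim

theorem invLim_connected_general
    (K : ℕ → Type) [∀ n, Fintype (K n)]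
    (R : ∀ n, K n → K n → Prop)
    (hrefl : ∀ n (x : K n), R n x x)
    (hconn : ∀ n, FinConn (R n) Set.univ)
    (f : ∀ n, K (n+1) → K n) (hf : ∀ n, IsConnEpi (R (n+1)) (R n) (f n)) :
    ∀ U₁ U₂ : Set (InvLim K f), IsOpen U₁ → IsOpen U₂ →
      U₁.Nonempty → U₂.Nonempty → (Set.univ : Set (InvLim K f)) = U₁ ∪ U₂ →
      ∃ x₁ ∈ U₁, ∃ x₂ ∈ U₂, limR R x₁ x₂ := by
  intro U₁ U₂ hO₁ hO₂ ⟨x₁, hx₁⟩ ⟨x₂, hx₂⟩ hcov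
  by_cases hmeet : (U₁ ∩ U₂).Nonempty
  · obtain ⟨z, hz₁, hz₂⟩ := hmeet
    exact ⟨z, hz₁, z, hz₂, fun n => hrefl n _⟩
  have hU₂ : U₂ = U₁ᶜ := Set.ext fun z =>
    ⟨fun h₂ h₁ => hmeet ⟨z, h₁, h₂⟩, fun h => (hcov ▸ Set.mem_univ z).resolve_left h⟩
  obtain ⟨N, hN⟩ := InvLim.exists_level_of_isClopen ⟨isOpen_compl_iff.mp (hU₂ ▸ hO₂), hO₁⟩
  obtain ⟨a, ⟨y₁, hy₁, rfl⟩, b, ⟨y₂, hy₂, rfl⟩, hab⟩ := hconn N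
    ((fun x : InvLim K f => x.1 N) '' U₁) ((fun x : InvLim K f => x.1 N) '' U₂)
    (Set.subset_univ _) (Set.subset_univ _) ⟨_, x₁, hx₁, rfl⟩ ⟨_, x₂, hx₂, rfl⟩
    (by rw [← Set.image_union, ← hcov, Set.image_univ,
      (InvLim.surjective_eval (fun n => (hf n).1.2.1) N).range_eq])
  obtain ⟨z₁, z₂, hz, hz₁, hz₂⟩ := InvLim.exists_limR_of_rel (fun n => (hf n).1) hab
  refine ⟨z₁, (hN _ _ hz₁).mpr hy₁, z₂, ?_, hz⟩
  rw [hU₂] at hy₂ ⊢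
  exact fun hz₂' => hy₂ ((hN _ _ hz₂).mp hz₂')

/-- the inverse limit of finite connected graphs with connected epimorphic
bonding maps is a connected topological graph. -/
theorem invLim_connected
    (K : ℕ → Type) [∀ n, Fintype (K n)]
    (R : ∀ n, K n → K n → Prop)
    (hrefl : ∀ n (x : K n), R n x x) (hsymm : ∀ n (x y : K n), R n x y → R n y x)
    (hconn : ∀ n, FinConn (R n) Set.univ)
    (f : ∀ n, K (n+1) → K n) (hf : ∀ n, IsConnEpi (R (n+1)) (R n) (f n)) :
    ∀ U₁ U₂ : Set (InvLim K f), IsOpen U₁ → IsOpen U₂ →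
      U₁.Nonempty → U₂.Nonempty → (Set.univ : Set (InvLim K f)) = U₁ ∪ U₂ →
      ∃ x₁ ∈ U₁, ∃ x₂ ∈ U₂, limR R x₁ x₂ :=
  invLim_connected_general K R hrefl hconn f hf
end

section
/- Let K be the inverse limit of finite connected graphs with connected epimorphic bonding maps f^n_m, with projections f_n : K → K_n. Then for every n and every x ∈ K_n, the clopen set f_n^{-1}(x) is a connected subset of the topological graph K. Consequently K is locally connected as a topological graph, i.e., admits a basis of connected open sets. -/
/-!
Let `X = f_n⁻¹(a)` and let `U₁, U₂` be open sets covering `X` and both meeting it. `X` is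
compact and the cylinders `f_M⁻¹(b)` form a basis, so for some level `M ≥ n` every level-`M`
cylinder inside `X` lies in `U₁` or in `U₂`. The image of `X` in `K_M` is `(f^M_n)⁻¹(a)`,
which is connected because `f^M_n` is a connected epimorphism. Sorting its vertices by the
open set containing their cylinder gives an edge of `K_M` from the `U₁`-part to the
`U₂`-part, and this edge lifts to an edge of `K` since all bonding maps are onto on edges.
The fibers are open, so they form a basis of connected open sets.
-/

open Filter Function

lemma finConn_singleton {V : Type*} {R : V → V → Prop} (hR : ∀ x, R x x) (a : V) :
    FinConn R {a} := by
  rintro U₁ U₂ hU₁ hU₂ ⟨x₁, hx₁⟩ ⟨x₂, hx₂⟩ -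
  have h₁ : x₁ = a := hU₁ hx₁
  have h₂ : x₂ = a := hU₂ hx₂
  exact ⟨x₁, hx₁, x₂, hx₂, h₁ ▸ h₂ ▸ hR a⟩

lemma exists_rel_of_finConn_image {T A : Type*} {R : T → T → Prop} (hR : ∀ x, R x x)
    {RA : A → A → Prop} {p : T → A} {X U₁ U₂ : Set T} (hX : FinConn RA (p '' X))
    (hlift : ∀ x ∈ X, ∀ x' ∈ X, RA (p x) (p x') →
      ∃ y ∈ X, ∃ y' ∈ X, p y = p x ∧ p y' = p x' ∧ R y y')
    (hfiber : ∀ x ∈ X, {y ∈ X | p y = p x} ⊆ U₁ ∨ {y ∈ X | p y = p x} ⊆ U₂)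
    (hne₁ : (X ∩ U₁).Nonempty) (hne₂ : (X ∩ U₂).Nonempty) (hcover : X ⊆ U₁ ∪ U₂) :
    ∃ x₁ ∈ X ∩ U₁, ∃ x₂ ∈ X ∩ U₂, R x₁ x₂ := by
  by_cases hmix : (X ∩ U₁ ∩ U₂).Nonempty
  · obtain ⟨x, ⟨hx, hx₁⟩, hx₂⟩ := hmix
    exact ⟨x, ⟨hx, hx₁⟩, x, ⟨hx, hx₂⟩, hR x⟩
  have hfiber₁ : ∀ x ∈ X ∩ U₁, ∀ y ∈ X, p y = p x → y ∈ U₁ := fun x hx y hy hxy =>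
    (hfiber x hx.1).elim (· ⟨hy, hxy⟩) fun h => (hmix ⟨x, hx, h ⟨hx.1, rfl⟩⟩).elim
  have hfiber₂ : ∀ x ∈ X ∩ U₂, ∀ y ∈ X, p y = p x → y ∈ U₂ := fun x hx y hy hxy =>
    (hfiber x hx.1).elim (fun h => (hmix ⟨x, ⟨hx.1, h ⟨hx.1, rfl⟩⟩, hx.2⟩).elim) (· ⟨hy, hxy⟩)
  obtain ⟨-, ⟨x₁, hx₁, rfl⟩, -, ⟨x₂, hx₂, rfl⟩, hedge⟩ :=
    hX _ _ (Set.image_mono Set.inter_subset_left) (Set.image_mono Set.inter_subset_left)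
      (hne₁.image p) (hne₂.image p) (by
        rw [← Set.image_union, ← Set.inter_union_distrib_left, Set.inter_eq_left.2 hcover])
  obtain ⟨y₁, hy₁, y₂, hy₂, hp₁, hp₂, hy⟩ := hlift x₁ hx₁.1 x₂ hx₂.1 hedge
  exact ⟨y₁, ⟨hy₁, hfiber₁ x₁ hx₁ y₁ hy₁ hp₁⟩, y₂, ⟨hy₂, hfiber₂ x₂ hx₂ y₂ hy₂ hp₂⟩, hy⟩

namespace InvLim

variable {K : ℕ → Type} {f : ∀ n, K (n+1) → K n}

/-- The composite bonding map `f^M_m : K M → K m`. -/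
def bond (f : ∀ n, K (n+1) → K n) {m M : ℕ} (h : m ≤ M) : K M → K m :=
  Nat.leRec (motive := fun k _ => K k → K m) id (fun k _ g => g ∘ f k) h

@[simp]
lemma bond_refl (m : ℕ) : bond f (le_refl m) = id :=
  Nat.leRec_self _ _

lemma bond_succ {m M : ℕ} (h : m ≤ M) (h' : m ≤ M + 1) : bond f h' = bond f h ∘ f M :=
  Nat.leRec_succ _ _ h

lemma f_comp_bond {m M : ℕ} (h : m + 1 ≤ M) :
    f m ∘ bond f h = bond f (Nat.le_of_succ_le h) := by
  induction M, h using Nat.le_induction with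
  | base => rw [bond_refl, bond_succ le_rfl, bond_refl]; rfl
  | succ M hM ih => rw [bond_succ hM, bond_succ (Nat.le_of_succ_le hM), ← ih]; rfl

lemma bond_coord (x : InvLim K f) {m M : ℕ} (h : m ≤ M) : bond f h (x.1 M) = x.1 m := by
  induction M, h using Nat.le_induction with
  | base => rw [bond_refl, id]
  | succ M hM ih => rw [bond_succ hM, comp_apply, x.2 M, ih]

variable (f) in
noncomputable def liftSeq (hs : ∀ n, Surjective (f n)) {m : ℕ} (b : K m) : ∀ j, K j
  | 0 => bond f (Nat.zero_le m) b
  | j + 1 => if h : j + 1 ≤ m then bond f h b else (hs j (liftSeq hs b j)).choose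

lemma liftSeq_of_le (hs : ∀ n, Surjective (f n)) {m : ℕ} (b : K m) :
    ∀ {j} (h : j ≤ m), liftSeq f hs b j = bond f h b
  | 0, _ => rfl
  | _ + 1, h => dif_pos h

lemma coord_surjective (hs : ∀ n, Surjective (f n)) (m : ℕ) :
    Surjective (fun x : InvLim K f => x.1 m) := by
  intro b
  refine ⟨⟨liftSeq f hs b, fun j => ?_⟩, by simp [liftSeq_of_le hs b le_rfl]⟩
  by_cases h : j + 1 ≤ m
  · rw [liftSeq_of_le hs b h, liftSeq_of_le hs b (Nat.le_of_succ_le h), ← f_comp_bond h]; rfl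
  · change f j (dite _ _ _) = _
    rw [dif_neg h]
    exact (hs j _).choose_spec

variable (f) in
def cylinder (m : ℕ) (b : K m) : Set (InvLim K f) :=
  {x | x.1 m = b}

lemma cylinder_coord_subset_of_le (x : InvLim K f) {m M : ℕ} (h : m ≤ M) :
    cylinder f M (x.1 M) ⊆ cylinder f m (x.1 m) := fun y (hy : y.1 M = x.1 M) =>
  show y.1 m = x.1 m by rw [← bond_coord y h, hy, bond_coord]

lemma continuous_coord (m : ℕ) : @Continuous _ _ _ ⊥ (fun x : InvLim K f => x.1 m) := by
  let _ : ∀ n, TopologicalSpace (K n) := fun _ => ⊥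
  exact (continuous_apply m).comp continuous_subtype_val

lemma isOpen_cylinder (m : ℕ) (b : K m) : IsOpen (cylinder f m b) :=
  letI : TopologicalSpace (K m) := ⊥
  haveI : DiscreteTopology (K m) := ⟨rfl⟩
  (continuous_coord m).isOpen_preimage {b} (isOpen_discrete _)

lemma isClosed_cylinder (m : ℕ) (b : K m) : IsClosed (cylinder f m b) :=
  letI : TopologicalSpace (K m) := ⊥
  haveI : DiscreteTopology (K m) := ⟨rfl⟩
  (isClosed_discrete {b}).preimage (continuous_coord m)

instance [∀ n, Finite (K n)] : CompactSpace (InvLim K f) := by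
  let _ : ∀ n, TopologicalSpace (K n) := fun _ => ⊥
  have _ : ∀ n, DiscreteTopology (K n) := fun _ => ⟨rfl⟩
  have hclosed : IsClosed {x : ∀ n, K n | ∀ n, f n (x (n+1)) = x n} := by
    simp only [Set.ofPred_forall]
    exact isClosed_iInter fun n =>
      isClosed_eq (continuous_of_discreteTopology.comp (continuous_apply _)) (continuous_apply n)
  exact isCompact_iff_compactSpace.mp hclosed.isCompact

lemma exists_cylinder_subset {U : Set (InvLim K f)} (hU : IsOpen U) {x : InvLim K f}
    (hx : x ∈ U) : ∃ m, cylinder f m (x.1 m) ⊆ U := by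
  let _ : ∀ n, TopologicalSpace (K n) := fun _ => ⊥
  have _ : ∀ n, DiscreteTopology (K n) := fun _ => ⟨rfl⟩
  obtain ⟨V, hV, rfl⟩ := isOpen_induced_iff.mp hU
  obtain ⟨I, u, hIu, hIV⟩ := isOpen_pi_iff.mp hV x.1 hx
  refine ⟨I.sup id, fun y hy => hIV fun i hi => ?_⟩
  have hyx : y.1 i = x.1 i := cylinder_coord_subset_of_le x (Finset.le_sup (f := id) hi) hy
  exact hyx ▸ (hIu i hi).2

lemma eventually_cylinder_subset {S : Set (InvLim K f)} (hS : IsCompact S) {ι : Type*}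
    {U : ι → Set (InvLim K f)} (hU : ∀ i, IsOpen (U i)) (hSU : S ⊆ ⋃ i, U i) :
    ∀ᶠ M in atTop, ∀ x ∈ S, ∃ i, cylinder f M (x.1 M) ⊆ U i := by
  have hlocal : ∀ x ∈ S, ∃ m i, cylinder f m (x.1 m) ⊆ U i := fun x hx => by
    obtain ⟨i, hi⟩ := Set.mem_iUnion.1 (hSU hx)
    obtain ⟨m, hm⟩ := exists_cylinder_subset (hU i) hi
    exact ⟨m, i, hm⟩
  choose! m hm using hlocal
  obtain ⟨t, htS, hSt⟩ := hS.elim_nhds_subcover (fun x => cylinder f (m x) (x.1 (m x)))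
    fun x _ => (isOpen_cylinder _ _).mem_nhds rfl
  filter_upwards [eventually_ge_atTop (t.sup m)] with M hM y hy
  obtain ⟨x, hxt, hyx⟩ := Set.mem_iUnion₂.1 (hSt hy)
  obtain ⟨i, hi⟩ := hm x (htS x hxt)
  refine ⟨i, fun z hz => hi ?_⟩
  exact (cylinder_coord_subset_of_le y ((Finset.le_sup hxt).trans hM) hz).trans hyx

variable {R : ∀ n, K n → K n → Prop}

lemma exists_limR_of_rel_s6 (hf : ∀ n, IsEpi (R (n+1)) (R n) (f n)) {M : ℕ} {b₁ b₂ : K M}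
    (h : R M b₁ b₂) :
    ∃ x₁ x₂ : InvLim K f, x₁.1 M = b₁ ∧ x₂.1 M = b₂ ∧ limR R x₁ x₂ := by
  -- Lift the edge in the inverse system of edges, whose bonding maps are onto.
  let E : ℕ → Type := fun j => {e : K j × K j // R j e.1 e.2}
  let fE : ∀ j, E (j+1) → E j := fun j e => ⟨(f j e.1.1, f j e.1.2), (hf j).1 _ _ e.2⟩
  have hsurj : ∀ j, Surjective (fE j) := by
    rintro j ⟨⟨a, a'⟩, e⟩
    obtain ⟨b, b', eb, rfl, rfl⟩ := (hf j).2.2 a a' e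
    exact ⟨⟨(b, b'), eb⟩, rfl⟩
  obtain ⟨x, hx⟩ := coord_surjective hsurj M ⟨(b₁, b₂), h⟩
  exact ⟨⟨fun j => (x.1 j).1.1, fun j => congrArg (·.1.1) (x.2 j)⟩,
    ⟨fun j => (x.1 j).1.2, fun j => congrArg (·.1.2) (x.2 j)⟩,
    congrArg (·.1.1) hx, congrArg (·.1.2) hx, fun j => (x.1 j).2⟩

lemma image_coord_cylinder (hs : ∀ n, Surjective (f n)) {n M : ℕ} (h : n ≤ M) (a : K n) :
    (fun x : InvLim K f => x.1 M) '' cylinder f n a = bond f h ⁻¹' {a} := by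
  ext b
  constructor
  · rintro ⟨x, hx, rfl⟩
    exact (bond_coord x h).trans hx
  · intro hb
    obtain ⟨x, rfl⟩ := coord_surjective hs M b
    exact ⟨x, (bond_coord x h).symm.trans hb, rfl⟩

lemma finConn_preimage_bond
    (hf : ∀ n (X : Set (K n)), FinConn (R n) X → FinConn (R (n+1)) (f n ⁻¹' X))
    {m M : ℕ} (h : m ≤ M) {X : Set (K m)} (hX : FinConn (R m) X) :
    FinConn (R M) (bond f h ⁻¹' X) := by
  induction M, h using Nat.le_induction with
  | base => rwa [bond_refl]
  | succ M hM ih => rw [bond_succ hM, Set.preimage_comp]; exact hf M _ ih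

theorem topConn_cylinder [∀ n, Finite (K n)] (hR : ∀ n (x : K n), R n x x)
    (hf : ∀ n, IsConnEpi (R (n+1)) (R n) (f n)) (n : ℕ) (a : K n) :
    TopConn (limR R) (cylinder f n a) := by
  intro U₁ U₂ hU₁ hU₂ hne₁ hne₂ hcover
  have hS : IsCompact (cylinder f n a) := (isClosed_cylinder n a).isCompact
  obtain ⟨M, hM, hnM⟩ := ((eventually_cylinder_subset hS (Bool.forall_bool.2 ⟨hU₂, hU₁⟩)
    (Set.union_eq_iUnion ▸ hcover)).and (eventually_ge_atTop n)).exists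
  refine exists_rel_of_finConn_image (RA := R M) (p := fun x => x.1 M) (fun x j => hR j _)
    ?_ (fun x hx x' hx' hxx' => ?_) (fun x hx => ?_) hne₁ hne₂ hcover
  · rw [image_coord_cylinder (fun j => (hf j).1.2.1) hnM]
    exact finConn_preimage_bond (fun j => (hf j).2) hnM (finConn_singleton (hR n) a)
  · obtain ⟨y, y', hy, hy', hyy'⟩ := exists_limR_of_rel_s6 (fun j => (hf j).1) hxx'
    refine ⟨y, ?_, y', ?_, hy, hy', hyy'⟩
    · exact (cylinder_coord_subset_of_le x hnM hy).trans hx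
    · exact (cylinder_coord_subset_of_le x' hnM hy').trans hx'
  · have hfiber : {y ∈ cylinder f n a | y.1 M = x.1 M} ⊆ cylinder f M (x.1 M) :=
      fun y hy => hy.2
    obtain ⟨i, hi⟩ := hM x hx
    cases i
    · exact Or.inr (hfiber.trans hi)
    · exact Or.inl (hfiber.trans hi)

end InvLim

theorem invLim_fibers_connected_and_locally_connected_general
    (K : ℕ → Type) [∀ n, Fintype (K n)]
    (R : ∀ n, K n → K n → Prop)
    (hrefl : ∀ n (x : K n), R n x x)
    (f : ∀ n, K (n+1) → K n) (hf : ∀ n, IsConnEpi (R (n+1)) (R n) (f n)) :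
    (∀ (n : ℕ) (a : K n),
        TopConn (limR R) {x : InvLim K f | x.1 n = a}) ∧
    (∀ (x : InvLim K f) (U : Set (InvLim K f)), IsOpen U → x ∈ U →
        ∃ V : Set (InvLim K f), IsOpen V ∧ x ∈ V ∧ V ⊆ U ∧ TopConn (limR R) V) := by
  refine ⟨InvLim.topConn_cylinder hrefl hf, fun x U hU hx => ?_⟩
  obtain ⟨m, hm⟩ := InvLim.exists_cylinder_subset hU hx
  exact ⟨_, InvLim.isOpen_cylinder m (x.1 m), rfl, hm,
    InvLim.topConn_cylinder hrefl hf m (x.1 m)⟩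

/-- in the inverse limit of finite connected graphs with connected
epimorphic bonding maps, every set `f_n⁻¹(x)` is a connected subset, and consequently
the limit is locally connected as a topological graph (it has a basis of connected
open sets). -/
theorem invLim_fibers_connected_and_locally_connected
    (K : ℕ → Type) [∀ n, Fintype (K n)]
    (R : ∀ n, K n → K n → Prop)
    (hrefl : ∀ n (x : K n), R n x x) (hsymm : ∀ n (x y : K n), R n x y → R n y x)
    (hconn : ∀ n, FinConn (R n) Set.univ)
    (f : ∀ n, K (n+1) → K n) (hf : ∀ n, IsConnEpi (R (n+1)) (R n) (f n)) :
    (∀ (n : ℕ) (a : K n),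
        TopConn (limR R) {x : InvLim K f | x.1 n = a}) ∧
    (∀ (x : InvLim K f) (U : Set (InvLim K f)), IsOpen U → x ∈ U →
        ∃ V : Set (InvLim K f), IsOpen V ∧ x ∈ V ∧ V ⊆ U ∧ TopConn (limR R) V) :=
  invLim_fibers_connected_and_locally_connected_general K R hrefl f hf
end

section
/- Let α : X → A be a graph homomorphism from a finite reflexive graph X to a finite connected reflexive graph A, with disjoint domains. Define the mapping cylinder C_α on dom(A) ∪ dom(X) by: edges within A and within X are as given, and x ∈ X is adjacent to a ∈ A iff a = α(x') for some x' with R^X(x,x'). Then C_α is a finite connected graph, and the canonical retraction r_α : C_α → A (r_α(x) = α(x) for x ∈ X, r_α(a) = a for a ∈ A) is a connected epimorphism. -/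
/-- The edge relation of the mapping cylinder of a graph homomorphism `α : X → A`,
on the disjoint union `A ⊕ X`: edges within `A` and within `X` are as given, and
`x ∈ X` is adjacent to `a ∈ A` iff `a = α x'` for some `x'` adjacent to `x` in `X`. -/
def cylR {A X : Type*} (RA : A → A → Prop) (RX : X → X → Prop) (α : X → A) :
    A ⊕ X → A ⊕ X → Prop
  | Sum.inl a, Sum.inl a' => RA a a'
  | Sum.inr x, Sum.inr x' => RX x x'
  | Sum.inl a, Sum.inr x => ∃ x', RX x x' ∧ α x' = a
  | Sum.inr x, Sum.inl a => ∃ x', RX x x' ∧ α x' = a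

/-- The canonical retraction of the mapping cylinder onto `A`. -/
def cylRetr {A X : Type*} (α : X → A) : A ⊕ X → A :=
  Sum.elim id α

/-! The inclusion `inl : A → C_α` is a graph section of the retraction `r = cylRetr α`, and every
vertex `v` of the cylinder is adjacent to `inl (r v)` (for `v = inr x` via the loop at `x`). Given
a splitting `U₁ ∪ U₂` of a preimage `r⁻¹ S` without cross edges, each `Uᵢ` therefore contains
`inl (r v)` for each of its vertices `v`, so pulling the `Uᵢ` back along `inl` splits `S`. -/

section GraphSection

variable {V W : Type*} {RV : V → V → Prop} {RW : W → W → Prop} {f : V → W} {s : W → V}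

theorem IsEpi.of_leftInverse (hf : ∀ v v', RV v v' → RW (f v) (f v'))
    (hfs : Function.LeftInverse f s) (hs : ∀ a a', RW a a' → RV (s a) (s a')) :
    IsEpi RV RW f :=
  ⟨hf, hfs.surjective, fun a a' h => ⟨s a, s a', hs a a' h, hfs a, hfs a'⟩⟩

theorem FinConn.preimage_of_leftInverse (hfs : Function.LeftInverse f s)
    (hs : ∀ a a', RW a a' → RV (s a) (s a')) (hsymm : ∀ v w, RV v w → RV w v)
    (hadj : ∀ v, RV v (s (f v)))
    {S : Set W} (hS : FinConn RW S) : FinConn RV (f ⁻¹' S) := by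
  intro U₁ U₂ hU₁ hU₂ hne₁ hne₂ hunion
  have hsec : ∀ a ∈ S, s a ∈ U₁ ∪ U₂ := fun a ha =>
    hunion ▸ show f (s a) ∈ S from (hfs a).symm ▸ ha
  by_cases hcross : (∃ v ∈ U₁, s (f v) ∈ U₂) ∨ ∃ v ∈ U₂, s (f v) ∈ U₁
  · rcases hcross with ⟨v, hv, hsv⟩ | ⟨v, hv, hsv⟩
    · exact ⟨v, hv, _, hsv, hadj v⟩
    · exact ⟨_, hsv, v, hv, hsymm _ _ (hadj v)⟩
  simp only [not_or, not_exists, not_and] at hcross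
  have hstay₁ : ∀ v ∈ U₁, s (f v) ∈ U₁ := fun v hv =>
    (hsec _ (hU₁ hv)).resolve_right (hcross.1 v hv)
  have hstay₂ : ∀ v ∈ U₂, s (f v) ∈ U₂ := fun v hv =>
    (hsec _ (hU₂ hv)).resolve_left (hcross.2 v hv)
  have hsub : ∀ {U}, U ⊆ f ⁻¹' S → s ⁻¹' U ⊆ S := fun hU a ha => hfs a ▸ hU ha
  have hne : ∀ {U}, U.Nonempty → (∀ v ∈ U, s (f v) ∈ U) → (s ⁻¹' U).Nonempty :=
    fun ⟨v, hv⟩ hstay => ⟨f v, hstay v hv⟩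
  have hcover : S = s ⁻¹' U₁ ∪ s ⁻¹' U₂ :=
    (Set.union_subset (hsub hU₁) (hsub hU₂)).antisymm' hsec
  obtain ⟨a₁, ha₁, a₂, ha₂, h⟩ :=
    hS _ _ (hsub hU₁) (hsub hU₂) (hne hne₁ hstay₁) (hne hne₂ hstay₂) hcover
  exact ⟨s a₁, ha₁, s a₂, ha₂, hs a₁ a₂ h⟩

end GraphSection

section Cylinder

variable {A X : Type*} {RA : A → A → Prop} {RX : X → X → Prop} {α : X → A}

theorem cylR_refl (hreflA : ∀ a, RA a a) (hreflX : ∀ x, RX x x) (v : A ⊕ X) :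
    cylR RA RX α v v := by
  rcases v with a | x
  exacts [hreflA a, hreflX x]

theorem cylR_symm (hsymmA : ∀ a a', RA a a' → RA a' a)
    (hsymmX : ∀ x x', RX x x' → RX x' x) :
    ∀ v w, cylR RA RX α v w → cylR RA RX α w v
  | .inl _, .inl _, h => hsymmA _ _ h
  | .inl _, .inr _, h => h
  | .inr _, .inl _, h => h
  | .inr _, .inr _, h => hsymmX _ _ h

theorem cylRetr_map_adj (hsymmA : ∀ a a', RA a a' → RA a' a)
    (hα : ∀ x x', RX x x' → RA (α x) (α x')) :
    ∀ v w, cylR RA RX α v w → RA (cylRetr α v) (cylRetr α w)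
  | .inl _, .inl _, h => h
  | .inl _, .inr _, ⟨_, hx, rfl⟩ => hsymmA _ _ (hα _ _ hx)
  | .inr _, .inl _, ⟨_, hx, rfl⟩ => hα _ _ hx
  | .inr _, .inr _, h => hα _ _ h

theorem cylR_inl_cylRetr (hreflA : ∀ a, RA a a) (hreflX : ∀ x, RX x x) (v : A ⊕ X) :
    cylR RA RX α v (.inl (cylRetr α v)) := by
  rcases v with a | x
  exacts [hreflA a, ⟨x, hreflX x, rfl⟩]

theorem cylRetr_leftInverse_inl : Function.LeftInverse (cylRetr α) Sum.inl := fun _ => rfl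

end Cylinder

theorem mappingCylinder_connected_and_retraction_connEpi_general
    {A X : Type*}
    (RA : A → A → Prop) (RX : X → X → Prop)
    (hreflA : ∀ a, RA a a) (hsymmA : ∀ a a', RA a a' → RA a' a)
    (hreflX : ∀ x, RX x x) (hsymmX : ∀ x x', RX x x' → RX x' x)
    (hconnA : FinConn RA Set.univ)
    (α : X → A) (hα : ∀ x x', RX x x' → RA (α x) (α x')) :
    (∀ v, cylR RA RX α v v) ∧
    (∀ v w, cylR RA RX α v w → cylR RA RX α w v) ∧
    FinConn (cylR RA RX α) Set.univ ∧
    IsConnEpi (cylR RA RX α) RA (cylRetr α) := by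
  have hinl : ∀ a a', RA a a' → cylR RA RX α (.inl a) (.inl a') := fun _ _ h => h
  have hpre : ∀ S : Set A, FinConn RA S → FinConn (cylR RA RX α) (cylRetr α ⁻¹' S) :=
    fun _ => FinConn.preimage_of_leftInverse cylRetr_leftInverse_inl hinl (cylR_symm hsymmA hsymmX)
      (cylR_inl_cylRetr hreflA hreflX)
  refine ⟨cylR_refl hreflA hreflX, cylR_symm hsymmA hsymmX, ?_, ?_, hpre⟩
  · simpa using hpre Set.univ hconnA
  · exact IsEpi.of_leftInverse (cylRetr_map_adj hsymmA hα) cylRetr_leftInverse_inl hinl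

/-- the mapping cylinder of a graph homomorphism `α : X → A` into a finite
connected reflexive graph `A` is a finite connected (reflexive, symmetric) graph, and the
canonical retraction `r_α : C_α → A` is a connected epimorphism. -/
theorem mappingCylinder_connected_and_retraction_connEpi
    {A X : Type*} [Fintype A] [Fintype X]
    (RA : A → A → Prop) (RX : X → X → Prop)
    (hreflA : ∀ a, RA a a) (hsymmA : ∀ a a', RA a a' → RA a' a)
    (hreflX : ∀ x, RX x x) (hsymmX : ∀ x x', RX x x' → RX x' x)
    (hconnA : FinConn RA Set.univ)
    (α : X → A) (hα : ∀ x x', RX x x' → RA (α x) (α x')) :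
    (∀ v, cylR RA RX α v v) ∧
    (∀ v w, cylR RA RX α v w → cylR RA RX α w v) ∧
    FinConn (cylR RA RX α) Set.univ ∧
    IsConnEpi (cylR RA RX α) RA (cylRetr α) :=
  mappingCylinder_connected_and_retraction_connEpi_general RA RX hreflA hsymmA hreflX hsymmX hconnA
    α hα
end

section
/- Let g : B → A be a connected epimorphism between finite connected graphs, and let β : X → B and α : X → A be graph homomorphisms from a finite graph X with g ∘ β = α. Then the map g* : C_β → C_α defined by g* = g on dom(B) and g* = id on dom(X) is a connected epimorphism between the mapping cylinders, and it satisfies r_α ∘ g* = g ∘ r_β, where r_β and r_α are the canonical retractions. -/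
/-! Over an edge of `C_α` joining `inl (g b)` to `inr x`, the witness `x'` of that edge gives a
second lift `β x'` of `g b`; either `β x'` is adjacent in `C_β` to `inr x` directly, or `b` and
`β x'` lie in the same fibre of `g`, which is connected because `g` is a connected epimorphism.
Together with the connected fibres of `g` over edges of `A`, this lets every cut of a preimage
`g*⁻¹(S)` be detected by an edge of `C_β`, whenever `S` is connected in `C_α`. -/

open Function Set

section Connectivity

variable {V W : Type*} {R : V → V → Prop}

theorem FinConn.exists_rel_of_subset_union {C T₁ T₂ : Set V} (hC : FinConn R C)
    (hcov : C ⊆ T₁ ∪ T₂) (h₁ : (C ∩ T₁).Nonempty) (h₂ : (C ∩ T₂).Nonempty) :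
    ∃ x₁ ∈ T₁, ∃ x₂ ∈ T₂, R x₁ x₂ := by
  obtain ⟨x₁, hx₁, x₂, hx₂, h⟩ := hC (C ∩ T₁) (C ∩ T₂) inter_subset_left inter_subset_left h₁ h₂
    (by rw [← inter_union_distrib_left, inter_eq_left.mpr hcov])
  exact ⟨x₁, hx₁.2, x₂, hx₂.2, h⟩

theorem finConn_pair (hrefl : ∀ a, R a a) (hsymm : ∀ a b, R a b → R b a) {a b : V}
    (h : R a b) : FinConn R {a, b} := by
  rintro U₁ U₂ hU₁ hU₂ ⟨y₁, hy₁⟩ ⟨y₂, hy₂⟩ -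
  refine ⟨y₁, hy₁, y₂, hy₂, ?_⟩
  rcases hU₁ hy₁ with rfl | rfl <;> rcases hU₂ hy₂ with rfl | rfl
  exacts [hrefl _, h, hsymm _ _ h, hrefl _]

theorem finConn_singleton_s13 {a : V} (h : R a a) : FinConn R {a} := by
  rintro U₁ U₂ hU₁ hU₂ ⟨y₁, hy₁⟩ ⟨y₂, hy₂⟩ -
  obtain rfl := hU₁ hy₁
  obtain rfl := hU₂ hy₂
  exact ⟨_, hy₁, _, hy₂, h⟩

/-- A weakening of connectedness of every `f ⁻¹' {f u₁, f u₂}` over an edge, which unlike it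
needs neither reflexivity nor symmetry of `R`. -/
def LiftsEdgesAcrossCuts (R : V → V → Prop) (R' : W → W → Prop) (f : V → W) : Prop :=
  ∀ u₁ u₂, R' (f u₁) (f u₂) → ∀ T₁ T₂ : Set V, f ⁻¹' {f u₁, f u₂} ⊆ T₁ ∪ T₂ → u₁ ∈ T₁ →
    u₂ ∈ T₂ → ∃ v₁ ∈ T₁, ∃ v₂ ∈ T₂, R v₁ v₂

theorem LiftsEdgesAcrossCuts.finConn_preimage {R' : W → W → Prop} {f : V → W}
    (hlift : LiftsEdgesAcrossCuts R R' f) (hsurj : Surjective f) {S : Set W}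
    (hS : FinConn R' S) : FinConn R (f ⁻¹' S) := by
  intro U₁ U₂ hU₁ hU₂ hne₁ hne₂ hcover
  have himage : S = f '' U₁ ∪ f '' U₂ := by
    rw [← image_union, ← hcover, image_preimage_eq S hsurj]
  obtain ⟨-, ⟨u₁, hu₁, rfl⟩, -, ⟨u₂, hu₂, rfl⟩, hedge⟩ :=
    hS (f '' U₁) (f '' U₂) (image_subset_iff.mpr hU₁) (image_subset_iff.mpr hU₂)
      (hne₁.image f) (hne₂.image f) himage
  refine hlift u₁ u₂ hedge U₁ U₂ ?_ hu₁ hu₂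
  rw [← hcover]
  exact preimage_mono (pair_subset (hU₁ hu₁) (hU₂ hu₂))

end Connectivity

section MappingCylinder

variable {A B X : Type*} {RA : A → A → Prop} {RB : B → B → Prop} {RX : X → X → Prop}
  {g : B → A} {β : X → B} {α : X → A}

theorem IsEpi.cylR_sumMap (hg : IsEpi RB RA g) (hcomm : g ∘ β = α) :
    IsEpi (cylR RB RX β) (cylR RA RX α) (Sum.map g id) := by
  obtain ⟨hhom, hsurj, hedge⟩ := hg
  refine ⟨?_, hsurj.sumMap surjective_id, ?_⟩
  · rintro (b | x) (b' | x') h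
    · exact hhom b b' h
    · obtain ⟨x'', hx'', rfl⟩ := h
      exact ⟨x'', hx'', (congrFun hcomm x'').symm⟩
    · obtain ⟨x'', hx'', rfl⟩ := h
      exact ⟨x'', hx'', (congrFun hcomm x'').symm⟩
    · exact h
  · rintro (a | x) (a' | x') h
    · obtain ⟨b, b', hbb', rfl, rfl⟩ := hedge a a' h
      exact ⟨.inl b, .inl b', hbb', rfl, rfl⟩
    · obtain ⟨x'', hx'', rfl⟩ := h
      exact ⟨.inl (β x''), .inr x', ⟨x'', hx'', rfl⟩, congrArg Sum.inl (congrFun hcomm x''), rfl⟩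
    · obtain ⟨x'', hx'', rfl⟩ := h
      exact ⟨.inr x, .inl (β x''), ⟨x'', hx'', rfl⟩, rfl, congrArg Sum.inl (congrFun hcomm x'')⟩
    · exact ⟨.inr x, .inr x', h, rfl, rfl⟩

theorem IsConnEpi.exists_rel_of_preimage_subset (hg : IsConnEpi RB RA g) {C : Set A}
    (hC : FinConn RA C) {T₁ T₂ : Set B} (hcov : g ⁻¹' C ⊆ T₁ ∪ T₂) {b₁ b₂ : B}
    (hb₁ : b₁ ∈ T₁) (hb₂ : b₂ ∈ T₂) (h₁ : g b₁ ∈ C) (h₂ : g b₂ ∈ C) :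
    ∃ c₁ ∈ T₁, ∃ c₂ ∈ T₂, RB c₁ c₂ :=
  (hg.2 C hC).exists_rel_of_subset_union hcov ⟨b₁, h₁, hb₁⟩ ⟨b₂, h₂, hb₂⟩

theorem IsConnEpi.exists_cylR_of_fiber (hreflA : ∀ a, RA a a) (hg : IsConnEpi RB RA g)
    {T₁ T₂ : Set (B ⊕ X)} {b₁ b₂ : B} (hfib : g b₂ = g b₁)
    (hcov : ∀ b, g b = g b₁ → Sum.inl b ∈ T₁ ∪ T₂) (hb₁ : Sum.inl b₁ ∈ T₁)
    (hb₂ : Sum.inl b₂ ∈ T₂) : ∃ v₁ ∈ T₁, ∃ v₂ ∈ T₂, cylR RB RX β v₁ v₂ := by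
  obtain ⟨c₁, hc₁, c₂, hc₂, h⟩ := hg.exists_rel_of_preimage_subset (T₁ := Sum.inl ⁻¹' T₁)
    (T₂ := Sum.inl ⁻¹' T₂) (finConn_singleton_s13 (hreflA (g b₁))) hcov hb₁ hb₂ rfl hfib
  exact ⟨.inl c₁, hc₁, .inl c₂, hc₂, h⟩

theorem IsConnEpi.liftsEdgesAcrossCuts_cylR (hreflA : ∀ a, RA a a)
    (hsymmA : ∀ a a', RA a a' → RA a' a) (hg : IsConnEpi RB RA g) (hcomm : g ∘ β = α) :
    LiftsEdgesAcrossCuts (cylR RB RX β) (cylR RA RX α) (Sum.map g id) := by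
  rintro (b₁ | x₁) (b₂ | x₂) hedge T₁ T₂ hcov hu₁ hu₂
  · obtain ⟨c₁, hc₁, c₂, hc₂, h⟩ := hg.exists_rel_of_preimage_subset (T₁ := Sum.inl ⁻¹' T₁)
      (T₂ := Sum.inl ⁻¹' T₂) (finConn_pair hreflA hsymmA hedge)
      (fun b hb => hcov (hb.imp (congrArg Sum.inl) (congrArg Sum.inl)))
      hu₁ hu₂ (.inl rfl) (.inr rfl)
    exact ⟨.inl c₁, hc₁, .inl c₂, hc₂, h⟩
  · obtain ⟨x', hx', hgx'⟩ := hedge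
    have hfib : g (β x') = g b₁ := (congrFun hcomm x').trans hgx'
    have hcov' : ∀ b, g b = g b₁ → Sum.inl b ∈ T₁ ∪ T₂ :=
      fun b hb => hcov (.inl (congrArg Sum.inl hb))
    rcases hcov' _ hfib with hβ | hβ
    · exact ⟨.inl (β x'), hβ, .inr x₂, hu₂, x', hx', rfl⟩
    · exact hg.exists_cylR_of_fiber hreflA hfib hcov' hu₁ hβ
  · obtain ⟨x', hx', hgx'⟩ := hedge
    have hfib : g (β x') = g b₂ := (congrFun hcomm x').trans hgx'
    have hcov' : ∀ b, g b = g (β x') → Sum.inl b ∈ T₁ ∪ T₂ :=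
      fun b hb => hcov (.inr (congrArg Sum.inl (hb.trans hfib)))
    rcases hcov' _ rfl with hβ | hβ
    · exact hg.exists_cylR_of_fiber hreflA hfib.symm hcov' hβ hu₂
    · exact ⟨.inr x₁, hu₁, .inl (β x'), hβ, x', hx', rfl⟩
  · exact ⟨.inr x₁, hu₁, .inr x₂, hu₂, hedge⟩

theorem cylRetr_comp_sumMap (hcomm : g ∘ β = α) :
    cylRetr α ∘ Sum.map g id = g ∘ cylRetr β := by
  funext u
  rcases u with b | x
  · rfl
  · exact (congrFun hcomm x).symm

end MappingCylinder

theorem mappingCylinder_induced_map_connEpi_general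
    {A B X : Type*}
    (RA : A → A → Prop) (RB : B → B → Prop) (RX : X → X → Prop)
    (hreflA : ∀ a, RA a a) (hsymmA : ∀ a a', RA a a' → RA a' a)
    (g : B → A) (hg : IsConnEpi RB RA g)
    (β : X → B)
    (α : X → A)
    (hcomm : g ∘ β = α) :
    IsConnEpi (cylR RB RX β) (cylR RA RX α) (Sum.map g id) ∧
    cylRetr α ∘ Sum.map g id = g ∘ cylRetr β := by
  have hepi := hg.1.cylR_sumMap (RX := RX) hcomm
  have hlift := hg.liftsEdgesAcrossCuts_cylR (RX := RX) hreflA hsymmA hcomm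
  exact ⟨⟨hepi, fun S hS => hlift.finConn_preimage hepi.2.1 hS⟩, cylRetr_comp_sumMap hcomm⟩

/-- given a connected epimorphism `g : B → A` between finite connected
graphs and homomorphisms `β : X → B`, `α : X → A` with `g ∘ β = α`, the induced map
`g* : C_β → C_α` (equal to `g` on `B` and the identity on `X`) is a connected
epimorphism of mapping cylinders satisfying `r_α ∘ g* = g ∘ r_β`. -/
theorem mappingCylinder_induced_map_connEpi
    {A B X : Type*} [Fintype A] [Fintype B] [Fintype X]
    (RA : A → A → Prop) (RB : B → B → Prop) (RX : X → X → Prop)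
    (hreflA : ∀ a, RA a a) (hsymmA : ∀ a a', RA a a' → RA a' a)
    (hreflB : ∀ b, RB b b) (hsymmB : ∀ b b', RB b b' → RB b' b)
    (hreflX : ∀ x, RX x x) (hsymmX : ∀ x x', RX x x' → RX x' x)
    (hconnA : FinConn RA Set.univ) (hconnB : FinConn RB Set.univ)
    (g : B → A) (hg : IsConnEpi RB RA g)
    (β : X → B) (hβ : ∀ x x', RX x x' → RB (β x) (β x'))
    (α : X → A) (hα : ∀ x x', RX x x' → RA (α x) (α x'))
    (hcomm : g ∘ β = α) :
    IsConnEpi (cylR RB RX β) (cylR RA RX α) (Sum.map g id) ∧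
    cylRetr α ∘ Sum.map g id = g ∘ cylRetr β :=
  mappingCylinder_induced_map_connEpi_general RA RB RX hreflA hsymmA g hg β α hcomm
end
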